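/- arXiv:0811.4087 — 4 statements merged into one kernel-verified Lean document; each statement's English description precedes it below -/
import Mathlib

section
/- (Von Waldenfels identity, degree-wise form of 𝒟 = I^{−1} ∗ (Σ n·D_∅^{(n)}).) For every n ≥ 1, in ℚ[S_n]: Σ_{i=0}^{n−1} D_∅^{(i)} ⋆ 𝒟_{n−i} = n · id_n, where id_n ∈ S_n is the identity permutation (so n·id_n is n times the identity element of S_n viewed in ℚ[S_n]), 𝒟_m := Σ_{j=0}^{m−1} (−1)^j D_{={1,…,j}}^{(m)} is the Dynkin element, D_∅^{(i)} = id_i is the identity permutation of S_i, D_∅^{(0)} is the unique permutation of the empty set which is the unit for ⋆, and ⋆ is the convolution product. -/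
open Classical in
/-- The descent set of a permutation `σ ∈ S_n` (1-based convention):
`Desc(σ) = {i ∈ {1,…,n−1} : σ(i) > σ(i+1)}`. -/
noncomputable def descSet {n : ℕ} (σ : Equiv.Perm (Fin n)) : Finset ℕ :=
  (Finset.Ioo 0 n).filter
    (fun i => ∃ h : i < n, σ ⟨i, h⟩ < σ ⟨i - 1, lt_of_le_of_lt (Nat.sub_le i 1) h⟩)

/-- The Solomon element `D_S^{(n)} = Σ_{σ ∈ S_n, Desc(σ) ⊆ S} σ` of `ℚ[S_n]`. -/
noncomputable def Dle (n : ℕ) (S : Finset ℕ) : MonoidAlgebra ℚ (Equiv.Perm (Fin n)) :=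
  ∑ σ ∈ Finset.univ.filter (fun σ : Equiv.Perm (Fin n) => descSet σ ⊆ S),
    MonoidAlgebra.single σ (1 : ℚ)

/-- The Solomon element `D_{=S}^{(n)} = Σ_{σ ∈ S_n, Desc(σ) = S} σ` of `ℚ[S_n]`. -/
noncomputable def Deq (n : ℕ) (S : Finset ℕ) : MonoidAlgebra ℚ (Equiv.Perm (Fin n)) :=
  ∑ σ ∈ Finset.univ.filter (fun σ : Equiv.Perm (Fin n) => descSet σ = S),
    MonoidAlgebra.single σ (1 : ℚ)

/-- `σ×τ ∈ S_{a+b}`: acts as `σ` on `{1,…,a}` and as `a+τ(·−a)` on `{a+1,…,a+b}`. -/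
def mulPerm {a b : ℕ} (σ : Equiv.Perm (Fin a)) (τ : Equiv.Perm (Fin b)) :
    Equiv.Perm (Fin (a + b)) :=
  (finSumFinEquiv (m := a) (n := b)).permCongr (Equiv.Perm.sumCongr σ τ)

/-- `ζ ∈ Sh(a,b)`: `ζ(1) < ⋯ < ζ(a)` and `ζ(a+1) < ⋯ < ζ(a+b)`. -/
def IsShuffle (a b : ℕ) (ζ : Equiv.Perm (Fin (a + b))) : Prop :=
  (∀ i j : Fin (a + b), i < j → (j : ℕ) < a → ζ i < ζ j) ∧
  (∀ i j : Fin (a + b), i < j → a ≤ (i : ℕ) → ζ i < ζ j)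

open Classical in
/-- The convolution product `⋆ : ℚ[S_a] × ℚ[S_b] → ℚ[S_{a+b}]`, the bilinear map
determined by `σ ⋆ τ = Σ_{ζ ∈ Sh(a,b)} ζ∘(σ×τ)`. -/
noncomputable def conv {a b : ℕ} (u : MonoidAlgebra ℚ (Equiv.Perm (Fin a)))
    (v : MonoidAlgebra ℚ (Equiv.Perm (Fin b))) :
    MonoidAlgebra ℚ (Equiv.Perm (Fin (a + b))) :=
  ∑ σ ∈ u.coeff.support, ∑ τ ∈ v.coeff.support,
    (u.coeff σ * v.coeff τ) •
      ∑ ζ ∈ Finset.univ.filter (fun ζ => IsShuffle a b ζ),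
        MonoidAlgebra.single (ζ * mulPerm σ τ) (1 : ℚ)

/-- The canonical identification `ℚ[S_m] → ℚ[S_n]` for `m = n`. -/
noncomputable def acast {m n : ℕ} (h : m = n)
    (u : MonoidAlgebra ℚ (Equiv.Perm (Fin m))) :
    MonoidAlgebra ℚ (Equiv.Perm (Fin n)) :=
  MonoidAlgebra.ofCoeff (Finsupp.mapDomain (fun σ => (finCongr h).permCongr σ) u.coeff)

/-- The Dynkin element `𝒟_m = Σ_{j=0}^{m−1} (−1)^j D_{={1,…,j}}^{(m)}` of `ℚ[S_m]`. -/
noncomputable def DynE (m : ℕ) : MonoidAlgebra ℚ (Equiv.Perm (Fin m)) :=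
  ∑ j ∈ Finset.range m, (-1 : ℚ) ^ j • Deq m (Finset.Icc 1 j)

/-! ### Auxiliary lemmas -/

open Finset Equiv

namespace VW

variable {n a b : ℕ}

lemma mem_descSet {σ : Equiv.Perm (Fin n)} {k : ℕ} (h0 : 0 < k) (h : k < n) :
    k ∈ descSet σ ↔ σ ⟨k, h⟩ < σ ⟨k - 1, by omega⟩ := by
  unfold descSet
  constructor
  · intro hk
    obtain ⟨-, h', hlt⟩ := Finset.mem_filter.mp hk
    exact hlt
  · intro hlt
    exact Finset.mem_filter.mpr ⟨Finset.mem_Ioo.mpr ⟨h0, h⟩, h, hlt⟩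

lemma descSet_subset (σ : Equiv.Perm (Fin n)) : descSet σ ⊆ Finset.Ioo 0 n :=
  Finset.filter_subset _ _

lemma incOn {π : Equiv.Perm (Fin n)} {a : ℕ} (ha : a ≤ n)
    (hd : ∀ k, 0 < k → k < a → k ∉ descSet π) :
    ∀ (k l : ℕ) (hkl : k < l) (hl : l < a), π ⟨k, by omega⟩ < π ⟨l, by omega⟩ := by
  intro k l hkl
  induction l with
  | zero => omega
  | succ l ih =>
    intro hl
    have hcons : π ⟨l, by omega⟩ < π ⟨l + 1, by omega⟩ := by
      have hnd := hd (l + 1) (by omega) hl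
      rw [mem_descSet (by omega) (by omega)] at hnd
      have hmk : (⟨l + 1 - 1, by omega⟩ : Fin n) = ⟨l, by omega⟩ := by simp
      rw [hmk] at hnd
      have hne : π ⟨l, by omega⟩ ≠ π ⟨l + 1, by omega⟩ := by
        intro hEq
        have := π.injective hEq
        simp [Fin.ext_iff] at this
      exact (not_lt.mp hnd).lt_of_ne hne
    rcases Nat.lt_succ_iff_lt_or_eq.mp hkl with hk | hk
    · exact lt_trans (ih hk (by omega)) hcons
    · subst hk; exact hcons

lemma descSet_one : descSet (1 : Equiv.Perm (Fin n)) = ∅ := by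
  rw [Finset.eq_empty_iff_forall_notMem]
  intro k hk
  have hsub := descSet_subset (1 : Equiv.Perm (Fin n)) hk
  rw [Finset.mem_Ioo] at hsub
  rw [mem_descSet hsub.1 hsub.2] at hk
  simp only [Equiv.Perm.one_apply, Fin.mk_lt_mk] at hk
  omega

lemma descSet_eq_empty_iff {σ : Equiv.Perm (Fin n)} : descSet σ = ∅ ↔ σ = 1 := by
  constructor
  · intro h
    have hmono : StrictMono ⇑σ := by
      intro x y hxy
      have h' : ∀ k, 0 < k → k < n → k ∉ descSet σ := by
        intro k _ _ hk
        rw [h] at hk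
        exact absurd hk (Finset.notMem_empty k)
      exact incOn (le_refl n) h' x y hxy y.2
    let e : Fin n ≃o Fin n := ⟨σ, fun {x y} => hmono.le_iff_le⟩
    have he : e = OrderIso.refl (Fin n) := Subsingleton.elim _ _
    ext x : 1
    have := congrArg (fun f => (f : Fin n ≃o Fin n) x) he
    simpa [e] using this
  · rintro rfl; exact descSet_one

lemma Dle_empty (a : ℕ) : Dle a ∅ = MonoidAlgebra.single 1 1 := by
  unfold Dle
  have hf : Finset.univ.filter (fun σ : Equiv.Perm (Fin a) => descSet σ ⊆ ∅) = {1} := by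
    ext σ
    simp [Finset.subset_empty, descSet_eq_empty_iff]
  rw [hf, Finset.sum_singleton]

lemma mulPerm_apply_castAdd (σ : Equiv.Perm (Fin a)) (τ : Equiv.Perm (Fin b)) (k : Fin a) :
    mulPerm σ τ (Fin.castAdd b k) = Fin.castAdd b (σ k) := by
  simp [mulPerm, finSumFinEquiv_symm_apply_castAdd, ← finSumFinEquiv_apply_left]

lemma mulPerm_apply_natAdd (σ : Equiv.Perm (Fin a)) (τ : Equiv.Perm (Fin b)) (t : Fin b) :
    mulPerm σ τ (Fin.natAdd a t) = Fin.natAdd a (τ t) := by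
  simp [mulPerm, finSumFinEquiv_symm_apply_natAdd, ← finSumFinEquiv_apply_right]

lemma fin_addCases_eq (x : Fin (a + b)) :
    (∃ k : Fin a, x = Fin.castAdd b k) ∨ ∃ t : Fin b, x = Fin.natAdd a t := by
  rcases lt_or_ge (x : ℕ) a with h | h
  · exact Or.inl ⟨⟨x, h⟩, by ext; simp⟩
  · refine Or.inr ⟨⟨(x : ℕ) - a, by have := x.2; omega⟩, ?_⟩
    ext; simp; omega

lemma mulPerm_mul (σ σ' : Equiv.Perm (Fin a)) (τ τ' : Equiv.Perm (Fin b)) :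
    mulPerm σ τ * mulPerm σ' τ' = mulPerm (σ * σ') (τ * τ') := by
  apply Equiv.ext
  intro x
  rcases fin_addCases_eq x with ⟨k, rfl⟩ | ⟨t, rfl⟩ <;>
    simp [Equiv.Perm.mul_apply, mulPerm_apply_castAdd, mulPerm_apply_natAdd]

lemma mulPerm_one : mulPerm (1 : Equiv.Perm (Fin a)) (1 : Equiv.Perm (Fin b)) = 1 := by
  apply Equiv.ext
  intro x
  rcases fin_addCases_eq x with ⟨k, rfl⟩ | ⟨t, rfl⟩ <;>
    simp [mulPerm_apply_castAdd, mulPerm_apply_natAdd]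

lemma mulPerm_one_inv (τ : Equiv.Perm (Fin b)) :
    (mulPerm (1 : Equiv.Perm (Fin a)) τ)⁻¹ = mulPerm 1 τ⁻¹ := by
  apply inv_eq_of_mul_eq_one_right
  rw [mulPerm_mul, one_mul, mul_inv_cancel, mulPerm_one]

lemma shuffle_castAdd_strictMono {ζ : Equiv.Perm (Fin (a + b))} (h : IsShuffle a b ζ) :
    StrictMono (fun k : Fin a => ζ (Fin.castAdd b k)) := by
  intro k l hkl
  exact h.1 (Fin.castAdd b k) (Fin.castAdd b l) (Fin.strictMono_castAdd b hkl)
    (by simpa using l.is_lt)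

lemma shuffle_natAdd_strictMono {ζ : Equiv.Perm (Fin (a + b))} (h : IsShuffle a b ζ) :
    StrictMono (fun t : Fin b => ζ (Fin.natAdd a t)) := by
  intro s t hst
  exact h.2 (Fin.natAdd a s) (Fin.natAdd a t) (Fin.strictMono_natAdd a hst) (by simp)

lemma isShuffle_of {ζ : Equiv.Perm (Fin (a + b))}
    (h1 : StrictMono (fun k : Fin a => ζ (Fin.castAdd b k)))
    (h2 : StrictMono (fun t : Fin b => ζ (Fin.natAdd a t))) : IsShuffle a b ζ := by
  constructor
  · intro i j hij hja
    have hij' : (i : ℕ) < (j : ℕ) := hij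
    have hia : (i : ℕ) < a := lt_trans hij' hja
    have ei : i = Fin.castAdd b ⟨(i : ℕ), hia⟩ := by ext; simp
    have ej : j = Fin.castAdd b ⟨(j : ℕ), hja⟩ := by ext; simp
    rw [ei, ej]
    exact h1 (show (⟨(i : ℕ), hia⟩ : Fin a) < ⟨(j : ℕ), hja⟩ from hij')
  · intro i j hij hai
    have hj2 := j.2
    have ei : i = Fin.natAdd a ⟨(i : ℕ) - a, by have := i.2; omega⟩ := by ext; simp; omega
    have ej : j = Fin.natAdd a ⟨(j : ℕ) - a, by omega⟩ := by
      ext; simp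
      have : a ≤ (j : ℕ) := le_trans hai (le_of_lt hij)
      omega
    rw [ei, ej]
    apply h2
    simp only [Fin.mk_lt_mk, Fin.lt_def] at hij ⊢
    omega

open Fin in
lemma shuffle_ext {ζ ζ' : Equiv.Perm (Fin (a + b))} (h : IsShuffle a b ζ) (h' : IsShuffle a b ζ')
    (hag : ∀ k : Fin a, ζ (Fin.castAdd b k) = ζ' (Fin.castAdd b k)) : ζ = ζ' := by
  classical
  set A : Finset (Fin (a + b)) := Finset.univ.image (fun k : Fin a => ζ (Fin.castAdd b k)) with hA
  have hcard : Aᶜ.card = b := by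
    have hinj : Function.Injective (fun k : Fin a => ζ (Fin.castAdd b k)) :=
      fun x y hxy => (Fin.strictMono_castAdd b).injective (ζ.injective hxy)
    rw [Finset.card_compl, hA, Finset.card_image_of_injective _ hinj]
    simp [Nat.add_sub_cancel_left]
  have hmem : ∀ t : Fin b, ζ (Fin.natAdd a t) ∈ Aᶜ := by
    intro t
    rw [Finset.mem_compl, hA]
    simp only [Finset.mem_image, Finset.mem_univ, true_and]
    rintro ⟨k, hk⟩
    have := ζ.injective hk
    have h1 : (Fin.castAdd b k : ℕ) = k := rfl
    have h2 : (Fin.natAdd a t : ℕ) = a + t := rfl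
    rw [Fin.ext_iff] at this
    rw [h1, h2] at this
    omega
  have hmem' : ∀ t : Fin b, ζ' (Fin.natAdd a t) ∈ Aᶜ := by
    intro t
    rw [Finset.mem_compl, hA]
    simp only [Finset.mem_image, Finset.mem_univ, true_and]
    rintro ⟨k, hk⟩
    rw [hag k] at hk
    have := ζ'.injective hk
    have h1 : (Fin.castAdd b k : ℕ) = k := rfl
    have h2 : (Fin.natAdd a t : ℕ) = a + t := rfl
    rw [Fin.ext_iff] at this
    rw [h1, h2] at this
    omega
  have e1 := Finset.orderEmbOfFin_unique hcard hmem (shuffle_natAdd_strictMono h)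
  have e2 := Finset.orderEmbOfFin_unique hcard hmem' (shuffle_natAdd_strictMono h')
  apply Equiv.ext
  intro x
  rcases fin_addCases_eq x with ⟨k, rfl⟩ | ⟨t, rfl⟩
  · exact hag k
  · calc ζ (Fin.natAdd a t) = Aᶜ.orderEmbOfFin hcard t := congrFun e1 t
    _ = ζ' (Fin.natAdd a t) := (congrFun e2 t).symm

lemma decomp_unique {ζ ζ' : Equiv.Perm (Fin (a + b))} {τ τ' : Equiv.Perm (Fin b)}
    (h : IsShuffle a b ζ) (h' : IsShuffle a b ζ')
    (he : ζ * mulPerm 1 τ = ζ' * mulPerm 1 τ') : ζ = ζ' ∧ τ = τ' := by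
  have hag : ∀ k : Fin a, ζ (Fin.castAdd b k) = ζ' (Fin.castAdd b k) := by
    intro k
    have := congrArg (fun p : Equiv.Perm (Fin (a + b)) => p (Fin.castAdd b k)) he
    simpa [Equiv.Perm.mul_apply, mulPerm_apply_castAdd] using this
  have hz : ζ = ζ' := shuffle_ext h h' hag
  subst hz
  have hm : mulPerm (1 : Equiv.Perm (Fin a)) τ = mulPerm 1 τ' := mul_left_cancel he
  refine ⟨rfl, Equiv.ext fun t => ?_⟩
  have := congrArg (fun p : Equiv.Perm (Fin (a + b)) => p (Fin.natAdd a t)) hm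
  simp only [mulPerm_apply_natAdd] at this
  have h2 : ∀ s : Fin b, (Fin.natAdd a s : ℕ) = a + s := fun _ => rfl
  rw [Fin.ext_iff] at this ⊢
  rw [h2, h2] at this
  omega

lemma decomp_exists (π : Equiv.Perm (Fin (a + b)))
    (hinc : ∀ k l : Fin a, k < l → π (Fin.castAdd b k) < π (Fin.castAdd b l)) :
    ∃ (τ : Equiv.Perm (Fin b)) (ζ : Equiv.Perm (Fin (a + b))),
      IsShuffle a b ζ ∧ ζ * mulPerm 1 τ = π := by
  classical
  set f : Fin b → Fin (a + b) := fun t => π (Fin.natAdd a t) with hf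
  set τ' : Equiv.Perm (Fin b) := Tuple.sort f with hτ'
  have hmono : Monotone (f ∘ τ') := Tuple.monotone_sort f
  have hstrict : StrictMono (f ∘ τ') := by
    apply hmono.strictMono_of_injective
    exact (π.injective.comp (Fin.strictMono_natAdd a).injective).comp τ'.injective
  refine ⟨τ'⁻¹, π * (mulPerm 1 τ'⁻¹)⁻¹, ?_, by group⟩
  have hv : (mulPerm (1 : Equiv.Perm (Fin a)) τ'⁻¹)⁻¹ = mulPerm 1 τ' := by
    rw [mulPerm_one_inv, inv_inv]
  rw [hv]
  apply isShuffle_of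
  · intro k l hkl
    simp only [Equiv.Perm.mul_apply, mulPerm_apply_castAdd, Equiv.Perm.one_apply]
    exact hinc k l hkl
  · intro s t hst
    simp only [Equiv.Perm.mul_apply, mulPerm_apply_natAdd]
    exact hstrict hst

lemma prod_apply_lt (ζ : Equiv.Perm (Fin (a + b))) (τ : Equiv.Perm (Fin b))
    {k : ℕ} (hk : k < a) :
    (ζ * mulPerm (1 : Equiv.Perm (Fin a)) τ) (⟨k, by omega⟩ : Fin (a + b)) = ζ (Fin.castAdd b ⟨k, hk⟩) := by
  have e : (⟨k, by omega⟩ : Fin (a + b)) = Fin.castAdd b ⟨k, hk⟩ := rfl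
  rw [e, Equiv.Perm.mul_apply, mulPerm_apply_castAdd, Equiv.Perm.one_apply]

lemma prod_apply_ge (ζ : Equiv.Perm (Fin (a + b))) (τ : Equiv.Perm (Fin b))
    {k : ℕ} (hk1 : a ≤ k) (hk2 : k < a + b) :
    (ζ * mulPerm (1 : Equiv.Perm (Fin a)) τ) (⟨k, hk2⟩ : Fin (a + b)) = ζ (Fin.natAdd a (τ (⟨k - a, by omega⟩ : Fin b))) := by
  have e : (⟨k, hk2⟩ : Fin (a + b)) = Fin.natAdd a ⟨k - a, by omega⟩ := by
    ext; simp; omega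
  rw [e, Equiv.Perm.mul_apply, mulPerm_apply_natAdd]

lemma not_descent_block1 {ζ : Equiv.Perm (Fin (a + b))} (h : IsShuffle a b ζ)
    (τ : Equiv.Perm (Fin b)) {k : ℕ} (h0 : 0 < k) (hk : k < a) :
    k ∉ descSet (ζ * mulPerm 1 τ) := by
  rw [mem_descSet h0 (by omega)]
  rw [prod_apply_lt ζ τ hk, prod_apply_lt ζ τ (show k - 1 < a by omega)]
  intro hlt
  have := shuffle_castAdd_strictMono h (show (⟨k - 1, by omega⟩ : Fin a) < ⟨k, hk⟩ by
    simp only [Fin.mk_lt_mk]; omega)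
  exact absurd hlt (asymm this)

lemma descent_block2 {ζ : Equiv.Perm (Fin (a + b))} (h : IsShuffle a b ζ)
    (τ : Equiv.Perm (Fin b)) {k : ℕ} (ha : a < k) (hk : k < a + b) :
    (k ∈ descSet (ζ * mulPerm 1 τ) ↔ k - a ∈ descSet τ) := by
  rw [mem_descSet (by omega) hk, mem_descSet (show 0 < k - a by omega) (show k - a < b by omega)]
  rw [prod_apply_ge ζ τ (by omega) hk, prod_apply_ge ζ τ (show a ≤ k - 1 by omega) (by omega)]
  rw [(shuffle_natAdd_strictMono h).lt_iff_lt]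
  have e1 : (⟨k - 1 - a, by omega⟩ : Fin b) = ⟨k - a - 1, by omega⟩ := by
    simp only [Fin.mk.injEq]; omega
  rw [e1]

lemma cond_of_decomp {ζ : Equiv.Perm (Fin (a + b))} (h : IsShuffle a b ζ)
    (τ : Equiv.Perm (Fin b)) {j : ℕ} (hτ : descSet τ = Finset.Icc 1 j) :
    descSet (ζ * mulPerm 1 τ) ∩ Finset.Ioo 0 a = ∅ ∧
    descSet (ζ * mulPerm 1 τ) ∩ Finset.Ioo a (a + b) = Finset.Icc (a + 1) (a + j) := by
  constructor
  · rw [Finset.eq_empty_iff_forall_notMem]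
    intro k hk
    rw [Finset.mem_inter, Finset.mem_Ioo] at hk
    exact not_descent_block1 h τ hk.2.1 hk.2.2 hk.1
  · ext k
    rw [Finset.mem_inter, Finset.mem_Ioo, Finset.mem_Icc]
    constructor
    · rintro ⟨hd, ha1, ha2⟩
      have hmem := (descent_block2 h τ ha1 ha2).mp hd
      rw [hτ, Finset.mem_Icc] at hmem
      omega
    · rintro ⟨h1, h2⟩
      have hk' : k - a ∈ descSet τ := by rw [hτ, Finset.mem_Icc]; omega
      have hb := descSet_subset τ hk'
      rw [Finset.mem_Ioo] at hb
      have ha1 : a < k := by omega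
      have ha2 : k < a + b := by omega
      exact ⟨(descent_block2 h τ ha1 ha2).mpr hk', ha1, ha2⟩

lemma descSet_tau_of_cond {ζ : Equiv.Perm (Fin (a + b))} (h : IsShuffle a b ζ)
    (τ : Equiv.Perm (Fin b)) {j : ℕ}
    (hcond : descSet (ζ * mulPerm 1 τ) ∩ Finset.Ioo a (a + b) = Finset.Icc (a + 1) (a + j)) :
    descSet τ = Finset.Icc 1 j := by
  ext k
  rw [Finset.mem_Icc]
  constructor
  · intro hk
    have hb := descSet_subset τ hk
    rw [Finset.mem_Ioo] at hb
    have hmem : a + k ∈ descSet (ζ * mulPerm 1 τ) := by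
      apply (descent_block2 h τ (by omega) (by omega)).mpr
      have e : a + k - a = k := by omega
      rw [e]; exact hk
    have hIcc : a + k ∈ Finset.Icc (a + 1) (a + j) := by
      rw [← hcond, Finset.mem_inter, Finset.mem_Ioo]
      exact ⟨hmem, by omega, by omega⟩
    rw [Finset.mem_Icc] at hIcc
    omega
  · intro hk
    have hmem : a + k ∈ descSet (ζ * mulPerm 1 τ) ∩ Finset.Ioo a (a + b) := by
      rw [hcond, Finset.mem_Icc]; omega
    rw [Finset.mem_inter, Finset.mem_Ioo] at hmem
    have hres := (descent_block2 h τ (by omega) hmem.2.2).mp hmem.1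
    have e : a + k - a = k := by omega
    rw [e] at hres
    exact hres

open Classical in
lemma count_lemma (a b j : ℕ) (π : Equiv.Perm (Fin (a + b))) :
    (∑ τ ∈ Finset.univ.filter (fun τ : Equiv.Perm (Fin b) => descSet τ = Finset.Icc 1 j),
      ∑ ζ ∈ Finset.univ.filter (fun ζ => IsShuffle a b ζ),
        (if ζ * mulPerm 1 τ = π then (1 : ℚ) else 0)) =
      if descSet π ∩ Finset.Ioo 0 a = ∅ ∧
          descSet π ∩ Finset.Ioo a (a + b) = Finset.Icc (a + 1) (a + j)
      then 1 else 0 := by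
  by_cases hc : descSet π ∩ Finset.Ioo 0 a = ∅ ∧
      descSet π ∩ Finset.Ioo a (a + b) = Finset.Icc (a + 1) (a + j)
  · rw [if_pos hc]
    have hd : ∀ k, 0 < k → k < a → k ∉ descSet π := by
      intro k h1 h2 hk
      have hmem : k ∈ descSet π ∩ Finset.Ioo 0 a :=
        Finset.mem_inter.mpr ⟨hk, Finset.mem_Ioo.mpr ⟨h1, h2⟩⟩
      rw [hc.1] at hmem
      exact absurd hmem (Finset.notMem_empty k)
    have hinc : ∀ k l : Fin a, k < l → π (Fin.castAdd b k) < π (Fin.castAdd b l) := by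
      intro k l hkl
      exact incOn (Nat.le_add_right a b) hd k l hkl l.2
    obtain ⟨τ₀, ζ₀, hsh₀, hprod₀⟩ := decomp_exists π hinc
    have hτ₀ : descSet τ₀ = Finset.Icc 1 j :=
      descSet_tau_of_cond hsh₀ τ₀ (by rw [hprod₀]; exact hc.2)
    rw [Finset.sum_eq_single_of_mem τ₀
      (Finset.mem_filter.mpr ⟨Finset.mem_univ _, hτ₀⟩)]
    · rw [Finset.sum_eq_single_of_mem ζ₀
        (Finset.mem_filter.mpr ⟨Finset.mem_univ _, hsh₀⟩)]
      · rw [hprod₀, if_pos rfl]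
      · intro ζ hζ hne
        rw [if_neg]
        intro hEq
        exact hne (decomp_unique (Finset.mem_filter.mp hζ).2 hsh₀ (hEq.trans hprod₀.symm)).1
    · intro τ hτ hne
      apply Finset.sum_eq_zero
      intro ζ hζ
      rw [if_neg]
      intro hEq
      exact hne (decomp_unique (Finset.mem_filter.mp hζ).2 hsh₀ (hEq.trans hprod₀.symm)).2
  · rw [if_neg hc]
    apply Finset.sum_eq_zero
    intro τ hτ
    apply Finset.sum_eq_zero
    intro ζ hζ
    rw [if_neg]
    intro hEq
    apply hc
    rw [← hEq]
    exact cond_of_decomp (Finset.mem_filter.mp hζ).2 τ (Finset.mem_filter.mp hτ).2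

lemma descSet_permCongr {m n : ℕ} (h : m = n) (σ : Equiv.Perm (Fin m)) :
    descSet ((finCongr h).permCongr σ) = descSet σ := by
  subst h
  have e : (finCongr rfl : Fin m ≃ Fin m).permCongr σ = σ := by
    apply Equiv.ext
    intro x
    simp
  rw [e]

open Classical in
noncomputable def shufSum (a b : ℕ) (τ : Equiv.Perm (Fin b)) :
    MonoidAlgebra ℚ (Equiv.Perm (Fin (a + b))) :=
  ∑ ζ ∈ Finset.univ.filter (fun ζ => IsShuffle a b ζ),
    MonoidAlgebra.single (ζ * mulPerm 1 τ) (1 : ℚ)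

lemma conv_expand (a b : ℕ) (v : MonoidAlgebra ℚ (Equiv.Perm (Fin b))) :
    conv (Dle a ∅) v = ∑ τ : Equiv.Perm (Fin b), v.coeff τ • shufSum a b τ := by
  rw [Dle_empty]
  unfold conv shufSum
  rw [MonoidAlgebra.coeff_single, Finsupp.support_single_ne_zero 1 one_ne_zero, Finset.sum_singleton]
  rw [Finset.sum_subset (Finset.subset_univ v.coeff.support) (fun τ _ hτ => by
    rw [Finsupp.notMem_support_iff.mp hτ, mul_zero, zero_smul])]
  apply Finset.sum_congr rfl
  intro τ _
  rw [Finsupp.single_eq_same, one_mul]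

open Classical in
lemma conv_DynE (a m : ℕ) :
    conv (Dle a ∅) (DynE m) =
      ∑ j ∈ Finset.range m,
        ∑ τ ∈ Finset.univ.filter (fun τ : Equiv.Perm (Fin m) => descSet τ = Finset.Icc 1 j),
          (-1 : ℚ) ^ j • shufSum a m τ := by
  rw [conv_expand]
  have hv : ∀ τ : Equiv.Perm (Fin m),
      (DynE m).coeff τ = ∑ j ∈ Finset.range m,
        (-1 : ℚ) ^ j * (if descSet τ = Finset.Icc 1 j then 1 else 0) := by
    intro τ
    unfold DynE
    rw [MonoidAlgebra.coeff_sum, Finsupp.finset_sum_apply]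
    apply Finset.sum_congr rfl
    intro j _
    rw [MonoidAlgebra.coeff_smul, Finsupp.smul_apply, smul_eq_mul]
    congr 1
    unfold Deq
    rw [MonoidAlgebra.coeff_sum, Finsupp.finset_sum_apply]
    simp only [MonoidAlgebra.coeff_single]
    by_cases hτ : descSet τ = Finset.Icc 1 j
    · rw [if_pos hτ]
      rw [Finset.sum_eq_single_of_mem τ (Finset.mem_filter.mpr ⟨Finset.mem_univ _, hτ⟩)
        (fun σ _ hne => Finsupp.single_eq_of_ne' hne)]
      exact Finsupp.single_eq_same
    · rw [if_neg hτ]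
      apply Finset.sum_eq_zero
      intro σ hσ
      apply Finsupp.single_eq_of_ne'
      intro hEq
      exact hτ (hEq ▸ (Finset.mem_filter.mp hσ).2)
  calc (∑ τ : Equiv.Perm (Fin m), (DynE m).coeff τ • shufSum a m τ)
      = ∑ τ : Equiv.Perm (Fin m), ∑ j ∈ Finset.range m,
          ((-1 : ℚ) ^ j * (if descSet τ = Finset.Icc 1 j then 1 else 0)) • shufSum a m τ := by
        refine Finset.sum_congr rfl fun τ _ => ?_
        rw [hv τ, Finset.sum_smul]
    _ = ∑ j ∈ Finset.range m, ∑ τ : Equiv.Perm (Fin m),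
          ((-1 : ℚ) ^ j * (if descSet τ = Finset.Icc 1 j then 1 else 0)) • shufSum a m τ :=
        Finset.sum_comm
    _ = ∑ j ∈ Finset.range m,
          ∑ τ ∈ Finset.univ.filter (fun τ : Equiv.Perm (Fin m) => descSet τ = Finset.Icc 1 j),
            (-1 : ℚ) ^ j • shufSum a m τ := by
        refine Finset.sum_congr rfl fun j _ => ?_
        rw [Finset.sum_filter]
        refine Finset.sum_congr rfl fun τ _ => ?_
        by_cases hτ : descSet τ = Finset.Icc 1 j
        · rw [if_pos hτ, if_pos hτ, mul_one]
        · rw [if_neg hτ, if_neg hτ, mul_zero, zero_smul]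

open Classical in
lemma per_i (a m n : ℕ) (h : a + m = n) (π : Equiv.Perm (Fin n)) :
    (acast h (conv (Dle a ∅) (DynE m))).coeff π =
      ∑ j ∈ Finset.range m, (-1 : ℚ) ^ j *
        (if descSet π ∩ Finset.Ioo 0 a = ∅ ∧
            descSet π ∩ Finset.Ioo a (a + m) = Finset.Icc (a + 1) (a + j) then 1 else 0) := by
  set π' : Equiv.Perm (Fin (a + m)) := (finCongr h.symm).permCongr π with hπ'
  have hDS : descSet π' = descSet π := descSet_permCongr h.symm π
  rw [conv_DynE]
  unfold acast
  rw [MonoidAlgebra.coeff_ofCoeff, MonoidAlgebra.coeff_sum, Finsupp.mapDomain_finset_sum, Finsupp.finset_sum_apply]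
  have hterm : ∀ j : ℕ, ∀ τ : Equiv.Perm (Fin m),
      (Finsupp.mapDomain (fun σ => (finCongr h).permCongr σ)
        ((-1 : ℚ) ^ j • shufSum a m τ).coeff) π =
      (-1 : ℚ) ^ j * ∑ ζ ∈ Finset.univ.filter (fun ζ => IsShuffle a m ζ),
        (if ζ * mulPerm 1 τ = π' then (1 : ℚ) else 0) := by
    intro j τ
    rw [MonoidAlgebra.coeff_smul, Finsupp.mapDomain_smul, Finsupp.smul_apply, smul_eq_mul]
    congr 1
    unfold shufSum
    rw [MonoidAlgebra.coeff_sum, Finsupp.mapDomain_finset_sum, Finsupp.finset_sum_apply]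
    refine Finset.sum_congr rfl fun ζ _ => ?_
    rw [MonoidAlgebra.coeff_single, Finsupp.mapDomain_single, Finsupp.single_apply]
    congr 1
    rw [Equiv.apply_eq_iff_eq_symm_apply, eq_iff_iff]
    constructor
    · intro hEq
      rw [hEq, hπ', Equiv.permCongr_symm, finCongr_symm]
    · intro hEq
      rw [hEq, hπ', Equiv.permCongr_symm, finCongr_symm]
  refine Finset.sum_congr rfl fun j _ => ?_
  rw [MonoidAlgebra.coeff_sum, Finsupp.mapDomain_finset_sum, Finsupp.finset_sum_apply]
  rw [Finset.sum_congr rfl (fun τ _ => hterm j τ), ← Finset.mul_sum]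
  rw [count_lemma a m j π', hDS]

open Classical in
lemma arith (n : ℕ) (hn : 1 ≤ n) (D : Finset ℕ) (hD : D ⊆ Finset.Ioo 0 n) :
    (∑ i ∈ Finset.range n, ∑ j ∈ Finset.range (n - i), (-1 : ℚ) ^ j *
        (if D ∩ Finset.Ioo 0 i = ∅ ∧ D ∩ Finset.Ioo i n = Finset.Icc (i + 1) (i + j)
          then 1 else 0)) =
      if D = ∅ then (n : ℚ) else 0 := by
  by_cases hDe : D = ∅
  · subst hDe
    rw [if_pos rfl]
    have hinner : ∀ i ∈ Finset.range n,
        (∑ j ∈ Finset.range (n - i), (-1 : ℚ) ^ j *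
          (if (∅ : Finset ℕ) ∩ Finset.Ioo 0 i = ∅ ∧
              (∅ : Finset ℕ) ∩ Finset.Ioo i n = Finset.Icc (i + 1) (i + j)
            then 1 else 0)) = 1 := by
      intro i hi
      rw [Finset.mem_range] at hi
      rw [Finset.sum_eq_single_of_mem 0 (Finset.mem_range.mpr (by omega))]
      · rw [if_pos, pow_zero, mul_one]
        refine ⟨Finset.empty_inter _, ?_⟩
        rw [Finset.empty_inter]
        symm
        apply Finset.Icc_eq_empty
        omega
      · intro j _ hj
        rw [if_neg, mul_zero]
        rintro ⟨-, h2⟩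
        have : i + 1 ∈ Finset.Icc (i + 1) (i + j) := Finset.mem_Icc.mpr (by omega)
        rw [← h2, Finset.empty_inter] at this
        exact absurd this (Finset.notMem_empty _)
    rw [Finset.sum_congr rfl hinner, Finset.sum_const, Finset.card_range, nsmul_eq_mul, mul_one]
  · rw [if_neg hDe]
    have hne : D.Nonempty := Finset.nonempty_iff_ne_empty.mpr hDe
    set a := D.min' hne with ha
    have haD : a ∈ D := D.min'_mem hne
    have hamin : ∀ x ∈ D, a ≤ x := fun x hx => D.min'_le x hx
    have haIoo := hD haD
    rw [Finset.mem_Ioo] at haIoo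
    obtain ⟨ha0, han⟩ := haIoo
    set c := D.card with hc
    have hc1 : 1 ≤ c := Finset.card_pos.mpr hne
    -- the two possibly-nonzero terms
    have hD1 : D ∩ Finset.Ioo (a - 1) n = D := by
      apply Finset.inter_eq_left.mpr
      intro x hx
      have h1 := hamin x hx
      have h2 := hD hx
      rw [Finset.mem_Ioo] at h2 ⊢
      omega
    have hD2 : D ∩ Finset.Ioo a n = D.erase a := by
      ext x
      rw [Finset.mem_inter, Finset.mem_Ioo, Finset.mem_erase]
      constructor
      · rintro ⟨hx, h1, h2⟩; exact ⟨by omega, hx⟩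
      · rintro ⟨hne', hx⟩
        have := hamin x hx
        have h2 := hD hx
        rw [Finset.mem_Ioo] at h2
        exact ⟨hx, by omega, h2.2⟩
    have hcard1 : (D ∩ Finset.Ioo (a - 1) n).card = c := by rw [hD1]
    have hcard2 : (D ∩ Finset.Ioo a n).card = c - 1 := by
      rw [hD2, Finset.card_erase_of_mem haD]
    -- condition forces j = card of the intersection
    have hjdet : ∀ i j, (D ∩ Finset.Ioo 0 i = ∅ ∧
        D ∩ Finset.Ioo i n = Finset.Icc (i + 1) (i + j)) → j = (D ∩ Finset.Ioo i n).card := by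
      intro i j hcond
      rw [hcond.2, Nat.card_Icc]
      omega
    -- inner sum as a single term
    set f : ℕ → ℚ := fun i => (-1 : ℚ) ^ ((D ∩ Finset.Ioo i n).card) *
      (if D ∩ Finset.Ioo 0 i = ∅ ∧
          D ∩ Finset.Ioo i n = Finset.Icc (i + 1) (i + (D ∩ Finset.Ioo i n).card)
        then 1 else 0) with hf
    have hinner : ∀ i ∈ Finset.range n,
        (∑ j ∈ Finset.range (n - i), (-1 : ℚ) ^ j *
          (if D ∩ Finset.Ioo 0 i = ∅ ∧ D ∩ Finset.Ioo i n = Finset.Icc (i + 1) (i + j)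
            then 1 else 0)) = f i := by
      intro i hi
      rw [Finset.mem_range] at hi
      have hjlt : (D ∩ Finset.Ioo i n).card < n - i := by
        have h1 : (D ∩ Finset.Ioo i n).card ≤ (Finset.Ioo i n).card :=
          Finset.card_le_card Finset.inter_subset_right
        rw [Nat.card_Ioo] at h1
        omega
      rw [Finset.sum_eq_single_of_mem ((D ∩ Finset.Ioo i n).card) (Finset.mem_range.mpr hjlt)]
      intro j _ hj
      rw [if_neg, mul_zero]
      intro hcond
      exact hj (hjdet i j hcond)
    rw [Finset.sum_congr rfl hinner]
    -- f vanishes away from a-1 and a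
    have hvanish : ∀ i ∈ Finset.range n, i ∉ ({a - 1, a} : Finset ℕ) → f i = 0 := by
      intro i hi hnotin
      simp only [Finset.mem_insert, Finset.mem_singleton] at hnotin
      push_neg at hnotin
      rw [hf]
      rw [mul_eq_zero]
      right
      rw [if_neg]
      rintro ⟨h1, h2⟩
      rcases lt_or_ge i (a - 1) with hlt | hge
      · -- i + 1 < a : then i+1 ∈ D, contradicting minimality
        have haIoo2 : a ∈ D ∩ Finset.Ioo i n := by
          rw [Finset.mem_inter, Finset.mem_Ioo]
          exact ⟨haD, by omega, han⟩
        rw [h2, Finset.mem_Icc] at haIoo2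
        have : i + 1 ∈ Finset.Icc (i + 1) (i + (D ∩ Finset.Ioo i n).card) :=
          Finset.mem_Icc.mpr (by omega)
        rw [← h2, Finset.mem_inter, Finset.mem_Ioo] at this
        have := hamin (i + 1) this.1
        omega
      · -- i > a : then a ∈ D ∩ Ioo 0 i = ∅
        have hgt : a < i := by omega
        have : a ∈ D ∩ Finset.Ioo 0 i := by
          rw [Finset.mem_inter, Finset.mem_Ioo]
          exact ⟨haD, ha0, hgt⟩
        rw [h1] at this
        exact absurd this (Finset.notMem_empty _)
    have hsub : ({a - 1, a} : Finset ℕ) ⊆ Finset.range n := by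
      intro x hx
      simp only [Finset.mem_insert, Finset.mem_singleton] at hx
      rw [Finset.mem_range]
      rcases hx with rfl | rfl <;> omega
    rw [← Finset.sum_subset hsub (fun x hx hnx => hvanish x hx hnx)]
    rw [Finset.sum_pair (show a - 1 ≠ a by omega)]
    -- minimality gives the first components of both conditions
    have hmin1 : D ∩ Finset.Ioo 0 (a - 1) = ∅ := by
      rw [Finset.eq_empty_iff_forall_notMem]
      intro x hx
      rw [Finset.mem_inter, Finset.mem_Ioo] at hx
      have := hamin x hx.1
      omega
    have hmin2 : D ∩ Finset.Ioo 0 a = ∅ := by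
      rw [Finset.eq_empty_iff_forall_notMem]
      intro x hx
      rw [Finset.mem_inter, Finset.mem_Ioo] at hx
      have := hamin x hx.1
      omega
    -- equivalence of the two interval conditions
    have hiff : (D = Finset.Icc a (a - 1 + c)) ↔
        (D.erase a = Finset.Icc (a + 1) (a + (c - 1))) := by
      constructor
      · intro hEq
        rw [hEq]
        ext x
        rw [Finset.mem_erase, Finset.mem_Icc, Finset.mem_Icc]
        omega
      · intro hEq
        have : D = insert a (D.erase a) := (Finset.insert_erase haD).symm
        rw [this, hEq]
        ext x
        rw [Finset.mem_insert, Finset.mem_Icc, Finset.mem_Icc]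
        omega
    have hval1 : f (a - 1) = (-1 : ℚ) ^ c * (if D = Finset.Icc a (a - 1 + c) then 1 else 0) := by
      simp only [hf]
      rw [hD1, ← hc]
      have e : a - 1 + 1 = a := by omega
      rw [e]
      congr 1
      refine if_congr ?_ rfl rfl
      constructor
      · rintro ⟨-, h2⟩; exact h2
      · intro h2; exact ⟨hmin1, h2⟩
    have hval2 : f a = (-1 : ℚ) ^ (c - 1) *
        (if D.erase a = Finset.Icc (a + 1) (a + (c - 1)) then 1 else 0) := by
      simp only [hf]
      have ec : (D.erase a).card = c - 1 := by rw [Finset.card_erase_of_mem haD, ← hc]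
      rw [hD2, ec]
      congr 1
      refine if_congr ?_ rfl rfl
      constructor
      · rintro ⟨-, h2⟩; exact h2
      · intro h2; exact ⟨hmin2, h2⟩
    rw [hval1, hval2]
    by_cases hcondA : D = Finset.Icc a (a - 1 + c)
    · rw [if_pos hcondA, if_pos (hiff.mp hcondA)]
      have e : c - 1 + 1 = c := by omega
      have hpow : (-1 : ℚ) ^ c = -(-1 : ℚ) ^ (c - 1) := by
        conv_lhs => rw [← e]
        rw [pow_succ]
        ring
      rw [hpow]
      ring
    · rw [if_neg hcondA, if_neg (fun hB => hcondA (hiff.mpr hB))]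
      ring

end VW

/-- von Waldenfels identity, degree-wise:
`Σ_{i=0}^{n−1} D_∅^{(i)} ⋆ 𝒟_{n−i} = n·id_n` in `ℚ[S_n]`. -/
theorem vonWaldenfels (n : ℕ) (hn : 1 ≤ n) :
    ∑ i ∈ (Finset.range n).attach,
        acast (by have := Finset.mem_range.mp i.2; omega : (i : ℕ) + (n - (i : ℕ)) = n)
          (conv (Dle i ∅) (DynE (n - i))) =
      n • MonoidAlgebra.single (1 : Equiv.Perm (Fin n)) (1 : ℚ) := by
  classical
  apply MonoidAlgebra.ext
  apply Finsupp.ext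
  intro π
  rw [MonoidAlgebra.coeff_sum, Finsupp.finset_sum_apply]
  set g : ℕ → ℚ := fun a => ∑ j ∈ Finset.range (n - a), (-1 : ℚ) ^ j *
    (if descSet π ∩ Finset.Ioo 0 a = ∅ ∧
        descSet π ∩ Finset.Ioo a n = Finset.Icc (a + 1) (a + j) then 1 else 0) with hg
  have hstep : ∀ i : {x // x ∈ Finset.range n},
      (acast (show (↑i : ℕ) + (n - (↑i : ℕ)) = n by
          have := Finset.mem_range.mp i.2; omega)
        (conv (Dle ↑i ∅) (DynE (n - ↑i)))).coeff π = g ↑i := by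
    intro i
    have hi := Finset.mem_range.mp i.2
    have h : (↑i : ℕ) + (n - (↑i : ℕ)) = n := by omega
    rw [VW.per_i (↑i) (n - ↑i) n h π]
    simp only [hg]
    rw [h]
  rw [Finset.sum_congr rfl fun i _ => hstep i]
  rw [Finset.sum_attach (Finset.range n) g]
  simp only [hg]
  rw [VW.arith n hn (descSet π) (VW.descSet_subset π)]
  rw [MonoidAlgebra.coeff_smul, Finsupp.smul_apply, MonoidAlgebra.coeff_single, Finsupp.single_apply]
  by_cases hπ : π = 1
  · rw [if_pos (VW.descSet_eq_empty_iff.mpr hπ), if_pos hπ.symm]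
    simp
  · rw [if_neg (fun h => hπ (VW.descSet_eq_empty_iff.mp h)), if_neg (fun h => hπ h.symm)]
    simp
end

section
/- The convolution product on the direct sum of the group algebras of the symmetric groups is associative: for all a, b, c ≥ 0 and all u ∈ ℚ[S_a], v ∈ ℚ[S_b], w ∈ ℚ[S_c], one has (u ⋆ v) ⋆ w = u ⋆ (v ⋆ w) in ℚ[S_{a+b+c}]. -/
open Function

namespace Tuple

variable {n : ℕ} {α β : Type*} [LinearOrder α] [LinearOrder β]

theorem sort_congr {f : Fin n → α} {g : Fin n → β} (h : ∀ i j, f i < f j ↔ g i < g j) :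
    sort f = sort g := by
  have hle : ∀ i j, f i ≤ f j ↔ g i ≤ g j := fun i j => by
    rw [← not_lt, ← not_lt, h]
  have heq : ∀ i j, f i = f j ↔ g i = g j := fun i j => by
    rw [le_antisymm_iff, le_antisymm_iff, hle, hle]
  rw [eq_comm, eq_sort_iff]
  simp only [Monotone, comp_apply, hle, heq]
  exact eq_sort_iff.mp rfl

theorem eq_sort_iff_strictMono {f : Fin n → α} (hf : Injective f) {σ : Equiv.Perm (Fin n)} :
    σ = sort f ↔ StrictMono (f ∘ σ) := by
  rw [eq_sort_iff]
  refine ⟨fun h => h.1.strictMono_of_injective (hf.comp σ.injective),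
    fun h => ⟨h.monotone, fun i j hij hfij => absurd (σ.injective (hf hfij)) hij.ne⟩⟩

end Tuple

section Standardization

variable {m n : ℕ} {α β : Type*} [LinearOrder α] [LinearOrder β]

/-- The standardization of `f`: `std f i` is the rank of `f i` among the values of `f`, ties being
broken by position. -/
noncomputable def std (f : Fin n → α) : Equiv.Perm (Fin n) := (Tuple.sort f)⁻¹

theorem eq_std_iff {f : Fin n → α} (hf : Injective f) {σ : Equiv.Perm (Fin n)} :
    σ = std f ↔ StrictMono (f ∘ ⇑σ⁻¹) := by
  rw [std, ← inv_eq_iff_eq_inv, Tuple.eq_sort_iff_strictMono hf]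

theorem std_lt_std_iff {f : Fin n → α} (hf : Injective f) (i j : Fin n) :
    std f i < std f j ↔ f i < f j := by
  simpa using (((eq_std_iff hf).mp rfl).lt_iff_lt (a := std f i) (b := std f j)).symm

theorem std_congr {f : Fin n → α} {g : Fin n → β} (h : ∀ i j, f i < f j ↔ g i < g j) :
    std f = std g := by
  rw [std, std, Tuple.sort_congr h]

theorem std_strictMono_comp {g : α → β} (hg : StrictMono g) (f : Fin n → α) :
    std (g ∘ f) = std f :=
  std_congr fun _ _ => hg.lt_iff_lt

theorem std_std_comp {f : Fin n → α} (hf : Injective f) (e : Fin m → Fin n) :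
    std (std f ∘ e) = std (f ∘ e) :=
  std_congr fun _ _ => std_lt_std_iff hf _ _

end Standardization

section Shuffle

variable {a b : ℕ}

@[simp]
theorem mulPerm_castAdd (σ : Equiv.Perm (Fin a)) (τ : Equiv.Perm (Fin b)) (i : Fin a) :
    mulPerm σ τ (Fin.castAdd b i) = Fin.castAdd b (σ i) := by
  simp [mulPerm]

@[simp]
theorem mulPerm_natAdd (σ : Equiv.Perm (Fin a)) (τ : Equiv.Perm (Fin b)) (j : Fin b) :
    mulPerm σ τ (Fin.natAdd a j) = Fin.natAdd a (τ j) := by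
  simp [mulPerm]

theorem mulPerm_inv (σ : Equiv.Perm (Fin a)) (τ : Equiv.Perm (Fin b)) :
    (mulPerm σ τ)⁻¹ = mulPerm σ⁻¹ τ⁻¹ := by
  rw [mulPerm, mulPerm, ← Equiv.permCongrHom_coe, ← map_inv, Equiv.Perm.sumCongr_inv]

theorem isShuffle_iff (ζ : Equiv.Perm (Fin (a + b))) :
    IsShuffle a b ζ ↔ StrictMono (ζ ∘ Fin.castAdd b) ∧ StrictMono (ζ ∘ Fin.natAdd a) := by
  refine ⟨fun h => ⟨fun i j hij => h.1 _ _ hij j.isLt,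
      fun i j hij => h.2 _ _ ((Fin.natAdd_lt_natAdd_iff a).mpr hij) (Nat.le_add_right a i)⟩,
    fun h => ⟨fun i j hij hj =>
      h.1 (show (⟨i, (Fin.lt_def.mp hij).trans hj⟩ : Fin a) < ⟨j, hj⟩ from hij),
      fun i j hij hi => ?_⟩⟩
  induction i using Fin.addCases with
  | left i => exact absurd hi (by simp)
  | right i =>
    induction j using Fin.addCases with
    | left j => simp only [Fin.lt_def, Fin.val_natAdd, Fin.val_castAdd] at hij; omega
    | right j => exact h.2 ((Fin.natAdd_lt_natAdd_iff a).mp hij)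

theorem isShuffle_mul_mulPerm_inv_iff (π : Equiv.Perm (Fin (a + b))) (σ : Equiv.Perm (Fin a))
    (τ : Equiv.Perm (Fin b)) :
    IsShuffle a b (π * (mulPerm σ τ)⁻¹) ↔
      σ = std (π ∘ Fin.castAdd b) ∧ τ = std (π ∘ Fin.natAdd a) := by
  have hL : ⇑(π * (mulPerm σ τ)⁻¹) ∘ Fin.castAdd b = (π ∘ Fin.castAdd b) ∘ ⇑σ⁻¹ := by
    funext i; simp [mulPerm_inv]
  have hR : ⇑(π * (mulPerm σ τ)⁻¹) ∘ Fin.natAdd a = (π ∘ Fin.natAdd a) ∘ ⇑τ⁻¹ := by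
    funext j; simp [mulPerm_inv]
  rw [isShuffle_iff, hL, hR, eq_std_iff (π.injective.comp (Fin.castAdd_injective a b)),
    eq_std_iff (π.injective.comp (Fin.natAdd_injective b a))]

end Shuffle

section Convolution

variable {a b : ℕ}

open Classical in
theorem coeff_sum_shuffles_mul_mulPerm (σ : Equiv.Perm (Fin a)) (τ : Equiv.Perm (Fin b))
    (π : Equiv.Perm (Fin (a + b))) :
    (∑ ζ ∈ Finset.univ.filter (fun ζ => IsShuffle a b ζ),
        MonoidAlgebra.single (ζ * mulPerm σ τ) (1 : ℚ)).coeff π =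
      if σ = std (π ∘ Fin.castAdd b) ∧ τ = std (π ∘ Fin.natAdd a) then 1 else 0 := by
  simp only [MonoidAlgebra.coeff_sum, MonoidAlgebra.coeff_single, Finsupp.finsetSum_apply,
    Finsupp.single_apply, ← eq_mul_inv_iff_mul_eq]
  rw [Finset.sum_ite_eq']
  simp only [Finset.mem_filter, Finset.mem_univ, true_and, isShuffle_mul_mulPerm_inv_iff]

theorem coeff_conv (u : MonoidAlgebra ℚ (Equiv.Perm (Fin a)))
    (v : MonoidAlgebra ℚ (Equiv.Perm (Fin b))) (π : Equiv.Perm (Fin (a + b))) :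
    (conv u v).coeff π =
      u.coeff (std (π ∘ Fin.castAdd b)) * v.coeff (std (π ∘ Fin.natAdd a)) := by
  rw [conv, MonoidAlgebra.coeff_sum, Finsupp.finsetSum_apply]
  simp_rw [MonoidAlgebra.coeff_sum (s := v.coeff.support), Finsupp.finsetSum_apply,
    MonoidAlgebra.coeff_smul_apply, coeff_sum_shuffles_mul_mulPerm, smul_eq_mul, mul_ite, mul_one,
    mul_zero, ite_and]
  simp only [Finset.sum_ite_irrel, Finset.sum_ite_eq', Finsupp.mem_support_iff, ne_eq, ite_not,
    Finset.sum_const_zero]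
  split_ifs <;> simp_all

theorem coeff_conv_conv_left {c : ℕ} (u : MonoidAlgebra ℚ (Equiv.Perm (Fin a)))
    (v : MonoidAlgebra ℚ (Equiv.Perm (Fin b))) (w : MonoidAlgebra ℚ (Equiv.Perm (Fin c)))
    (π : Equiv.Perm (Fin (a + b + c))) :
    (conv (conv u v) w).coeff π =
      u.coeff (std (π ∘ Fin.castAdd c ∘ Fin.castAdd b)) *
        v.coeff (std (π ∘ Fin.castAdd c ∘ Fin.natAdd a)) *
          w.coeff (std (π ∘ Fin.natAdd (a + b))) := by
  have hπ : Injective (π ∘ Fin.castAdd c) := π.injective.comp (Fin.castAdd_injective _ _)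
  rw [coeff_conv, coeff_conv, std_std_comp hπ, std_std_comp hπ]
  rfl

theorem coeff_conv_conv_right {c : ℕ} (u : MonoidAlgebra ℚ (Equiv.Perm (Fin a)))
    (v : MonoidAlgebra ℚ (Equiv.Perm (Fin b))) (w : MonoidAlgebra ℚ (Equiv.Perm (Fin c)))
    (π : Equiv.Perm (Fin (a + (b + c)))) :
    (conv u (conv v w)).coeff π =
      u.coeff (std (π ∘ Fin.castAdd (b + c))) *
        (v.coeff (std (π ∘ Fin.natAdd a ∘ Fin.castAdd c)) *
          w.coeff (std (π ∘ Fin.natAdd a ∘ Fin.natAdd b))) := by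
  have hπ : Injective (π ∘ Fin.natAdd a) := π.injective.comp (Fin.natAdd_injective _ _)
  rw [coeff_conv, coeff_conv, std_std_comp hπ, std_std_comp hπ]
  rfl

theorem coeff_acast {m n : ℕ} (h : m = n) (x : MonoidAlgebra ℚ (Equiv.Perm (Fin m)))
    (π : Equiv.Perm (Fin n)) :
    (acast h x).coeff π = x.coeff ((finCongr h).permCongr.symm π) :=
  Finsupp.mapDomain_equiv_apply _ _

theorem std_permCongr_finCongr_symm_comp {k m n : ℕ} (h : m = n) (π : Equiv.Perm (Fin n))
    (e : Fin k → Fin m) :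
    std ((finCongr h).permCongr.symm π ∘ e) = std (π ∘ Fin.cast h ∘ e) :=
  std_strictMono_comp (Fin.cast_strictMono h.symm) _

end Convolution

/-- the convolution product is associative:
`(u ⋆ v) ⋆ w = u ⋆ (v ⋆ w)` in `ℚ[S_{a+b+c}]`. -/
theorem conv_assoc (a b c : ℕ)
    (u : MonoidAlgebra ℚ (Equiv.Perm (Fin a)))
    (v : MonoidAlgebra ℚ (Equiv.Perm (Fin b)))
    (w : MonoidAlgebra ℚ (Equiv.Perm (Fin c))) :
    conv (conv u v) w = acast (Nat.add_assoc a b c).symm (conv u (conv v w)) := by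
  set h := (Nat.add_assoc a b c).symm
  have hL : Fin.cast h ∘ Fin.castAdd (b + c) = Fin.castAdd c ∘ Fin.castAdd (n := a) b := by
    funext i; ext; simp
  have hM :
      Fin.cast h ∘ Fin.natAdd a ∘ Fin.castAdd c = Fin.castAdd c ∘ Fin.natAdd (m := b) a := by
    funext i; ext; simp
  have hR : Fin.cast h ∘ Fin.natAdd a ∘ Fin.natAdd b = Fin.natAdd (m := c) (a + b) := by
    funext i; ext; simp [Nat.add_assoc]
  ext π
  rw [coeff_conv_conv_left, coeff_acast, coeff_conv_conv_right, std_permCongr_finCongr_symm_comp,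
    std_permCongr_finCongr_symm_comp, std_permCongr_finCongr_symm_comp, hL, hM, hR, mul_assoc]
end

section
/- Let A be an associative (not necessarily commutative) unital algebra over a field of characteristic zero and let R : A → A be a Rota–Baxter operator of weight 1, i.e. a linear map satisfying R(x)R(y) + R(xy) = R(R(x)y + xR(y)) for all x, y ∈ A. Then the bilinear product a • b := R(a)·b − b·R(a) + b·a is left pre-Lie: for all a, b, c ∈ A, (a • b) • c − a • (b • c) = (b • a) • c − b • (a • c). -/
/-!
Write `L_a c = a • c = ⁅R a, c⁆ + c * a`, so `L_a = ad (R a) + ρ_a` with `ρ_a` right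
multiplication. The pre-Lie identity says `⁅L_a, L_b⁆ = L_{a • b - b • a}`. In any ring,
`⁅ad x + ρ_a, ad y + ρ_b⁆ = ad ⁅x, y⁆ + ρ_{⁅x, b⁆ + ⁅a, y⁆ - ⁅a, b⁆}`, and the Rota–Baxter
identity is exactly what turns `⁅R a, R b⁆` into `R (⁅R a, b⁆ + ⁅a, R b⁆ - ⁅a, b⁆)`,
where the argument of `R` is `a • b - b • a`.
-/

/-- The left pre-Lie product `a • b = R(a)·b − b·R(a) + b·a` associated to a
Rota–Baxter operator `R` of weight 1. -/
def rbPreLie {K A : Type*} [CommSemiring K] [Ring A] [Algebra K A]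
    (R : A →ₗ[K] A) (a b : A) : A :=
  R a * b - b * R a + b * a

theorem lie_add_mul_right_commutator {A : Type*} [Ring A] (x y a b c : A) :
    (⁅x, ⁅y, c⁆ + c * b⁆ + (⁅y, c⁆ + c * b) * a) - (⁅y, ⁅x, c⁆ + c * a⁆ + (⁅x, c⁆ + c * a) * b) =
      ⁅⁅x, y⁆, c⁆ + c * (⁅x, b⁆ + ⁅a, y⁆ - ⁅a, b⁆) := by
  simp only [Ring.lie_def]
  noncomm_ring

section RotaBaxter

variable {K A : Type*} [CommSemiring K] [Ring A] [Algebra K A] (R : A →ₗ[K] A)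

theorem rbPreLie_eq_lie_add_mul (a b : A) : rbPreLie R a b = ⁅R a, b⁆ + b * a := by
  rw [rbPreLie, Ring.lie_def]

theorem rbPreLie_sub_rbPreLie (a b c : A) :
    rbPreLie R a c - rbPreLie R b c = rbPreLie R (a - b) c := by
  simp only [rbPreLie, map_sub]
  noncomm_ring

theorem rbPreLie_sub_rbPreLie_swap (a b : A) :
    rbPreLie R a b - rbPreLie R b a = ⁅R a, b⁆ + ⁅a, R b⁆ - ⁅a, b⁆ := by
  simp only [rbPreLie, Ring.lie_def]
  noncomm_ring

theorem lie_apply_eq_apply_rbPreLie_sub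
    (hR : ∀ x y : A, R x * R y + R (x * y) = R (R x * y + x * R y)) (a b : A) :
    ⁅R a, R b⁆ = R (rbPreLie R a b - rbPreLie R b a) := by
  have hab := hR a b
  have hba := hR b a
  rw [rbPreLie_sub_rbPreLie_swap]
  simp only [Ring.lie_def, map_sub, map_add] at hab hba ⊢
  linear_combination (norm := noncomm_ring) hab - hba

end RotaBaxter

theorem rotaBaxter_preLie_general {K A : Type*} [Field K] [Ring A] [Algebra K A]
    (R : A →ₗ[K] A)
    (hR : ∀ x y : A, R x * R y + R (x * y) = R (R x * y + x * R y)) :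
    ∀ a b c : A,
      rbPreLie R (rbPreLie R a b) c - rbPreLie R a (rbPreLie R b c) =
        rbPreLie R (rbPreLie R b a) c - rbPreLie R b (rbPreLie R a c) := by
  intro a b c
  rw [sub_eq_sub_iff_sub_eq_sub, rbPreLie_sub_rbPreLie]
  calc rbPreLie R (rbPreLie R a b - rbPreLie R b a) c
      = ⁅⁅R a, R b⁆, c⁆ + c * (⁅R a, b⁆ + ⁅a, R b⁆ - ⁅a, b⁆) := by
        rw [rbPreLie_eq_lie_add_mul, ← lie_apply_eq_apply_rbPreLie_sub R hR,
          rbPreLie_sub_rbPreLie_swap]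
    _ = rbPreLie R a (rbPreLie R b c) - rbPreLie R b (rbPreLie R a c) := by
        simp only [rbPreLie_eq_lie_add_mul]
        exact (lie_add_mul_right_commutator _ _ _ _ _).symm

/-- if `R` is a Rota–Baxter operator of weight 1 on an associative
unital algebra `A` over a field of characteristic zero, then
`a • b := R(a)·b − b·R(a) + b·a` is a left pre-Lie product. -/
theorem rotaBaxter_preLie {K A : Type*} [Field K] [CharZero K] [Ring A] [Algebra K A]
    (R : A →ₗ[K] A)
    (hR : ∀ x y : A, R x * R y + R (x * y) = R (R x * y + x * R y)) :
    ∀ a b c : A,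
      rbPreLie R (rbPreLie R a b) c - rbPreLie R a (rbPreLie R b c) =
        rbPreLie R (rbPreLie R b a) c - rbPreLie R b (rbPreLie R a c) :=
  rotaBaxter_preLie_general R hR
end

section
/- (Renormalization group equation for the Bogoliubov-type recursion in a Rota–Baxter algebra, degree-wise form.) Let A be an associative unital algebra over ℚ, let R : A → A be a Rota–Baxter operator of weight 1, and let a ∈ A. Define the sequence (c_n)_{n≥0} by c_0 = 1 and c_n := R(c_{n−1}·a) for n ≥ 1 (the coefficients of the solution X(λ) = 1 + R(X(λ)·λa)), and define the pre-Lie iterates (ℓ_n)_{n≥1} by ℓ_1 := a and ℓ_{n+1} := ℓ_n • a = R(ℓ_n)·a − a·R(ℓ_n) + a·ℓ_n. Then for every n ≥ 1: n·c_n = Σ_{i=1}^{n} c_{n−i}·R(ℓ_i). -/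
/-!
Write `L q = ℓ_{q+1}` and `P n = ∑_{p+q=n} c_p R(L q)`, the right-hand side in degree `n + 1`.
The Rota–Baxter identity in the form `R x R y = R(R x y + x (R y - y))`, applied to `x = c_p a`,
rewrites `c_{p+1} R(L q)` as `R(c_{p+1} L q + c_p a (R(L q) - L q))`, while the pre-Lie recursion
gives `c_p R(L q) a = c_p L (q+1) + c_p a (R(L q) - L q)`. Comparing the two,
`P (n+1) = R((P n + c_{n+1}) a)`, which is also the recursion satisfied by `(n+1) c_{n+1}`.
-/

open Finset

namespace RotaBaxter

variable {A : Type*} [Ring A] (R : A →+ A)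

theorem map_mul_map_eq
    (hR : ∀ x y : A, R x * R y + R (x * y) = R (R x * y + x * R y)) (x y : A) :
    R x * R y = R (R x * y + x * (R y - y)) := by
  rw [mul_sub, ← add_sub_assoc, map_sub, ← hR]
  abel

variable {R} (a : A) (c L : ℕ → A)

theorem sum_antidiagonal_mul_right
    (hL : ∀ n, L (n + 1) = R (L n) * a - a * R (L n) + a * L n) (n : ℕ) :
    (∑ pq ∈ antidiagonal n, c pq.1 * R (L pq.2)) * a =
      ∑ pq ∈ antidiagonal (n + 1), c pq.1 * L pq.2 - c (n + 1) * L 0 +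
        ∑ pq ∈ antidiagonal n, c pq.1 * (a * (R (L pq.2) - L pq.2)) := by
  rw [Nat.sum_antidiagonal_succ', add_sub_cancel_left, sum_mul, ← sum_add_distrib]
  refine sum_congr rfl fun pq _ => ?_
  rw [hL, mul_assoc, ← mul_add]
  congr 1
  rw [mul_sub]
  abel

theorem sum_antidiagonal_succ_eq_map
    (hR : ∀ x y : A, R x * R y + R (x * y) = R (R x * y + x * R y))
    (hc0 : c 0 = 1) (hc : ∀ n, c (n + 1) = R (c n * a)) (n : ℕ) :
    ∑ pq ∈ antidiagonal (n + 1), c pq.1 * R (L pq.2) =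
      R (∑ pq ∈ antidiagonal (n + 1), c pq.1 * L pq.2 +
        ∑ pq ∈ antidiagonal n, c pq.1 * (a * (R (L pq.2) - L pq.2))) := by
  rw [Nat.sum_antidiagonal_succ, Nat.sum_antidiagonal_succ, hc0, one_mul, one_mul, add_assoc,
    ← sum_add_distrib, map_add, map_sum]
  congr 1
  refine sum_congr rfl fun pq _ => ?_
  rw [hc, map_mul_map_eq R hR, ← hc, mul_assoc]

theorem sum_antidiagonal_succ_eq_map_add_mul
    (hR : ∀ x y : A, R x * R y + R (x * y) = R (R x * y + x * R y))
    (hc0 : c 0 = 1) (hc : ∀ n, c (n + 1) = R (c n * a))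
    (hL0 : L 0 = a) (hL : ∀ n, L (n + 1) = R (L n) * a - a * R (L n) + a * L n) (n : ℕ) :
    ∑ pq ∈ antidiagonal (n + 1), c pq.1 * R (L pq.2) =
      R ((∑ pq ∈ antidiagonal n, c pq.1 * R (L pq.2) + c (n + 1)) * a) := by
  rw [sum_antidiagonal_succ_eq_map a c L hR hc0 hc, add_mul,
    sum_antidiagonal_mul_right a c L hL, hL0]
  abel_nf

theorem succ_nsmul_eq_sum_antidiagonal
    (hR : ∀ x y : A, R x * R y + R (x * y) = R (R x * y + x * R y))
    (hc0 : c 0 = 1) (hc : ∀ n, c (n + 1) = R (c n * a))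
    (hL0 : L 0 = a) (hL : ∀ n, L (n + 1) = R (L n) * a - a * R (L n) + a * L n) (n : ℕ) :
    (n + 1) • c (n + 1) = ∑ pq ∈ antidiagonal n, c pq.1 * R (L pq.2) := by
  induction n with
  | zero => simp [hc, hc0, hL0]
  | succ n ih =>
    rw [sum_antidiagonal_succ_eq_map_add_mul a c L hR hc0 hc hL0 hL, ← ih, ← succ_nsmul,
      hc, ← map_nsmul, smul_mul_assoc]

end RotaBaxter

theorem Finset.sum_Icc_one_succ_eq_sum_antidiagonal {M : Type*} [AddCommMonoid M]
    (f : ℕ → ℕ → M) (n : ℕ) :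
    ∑ i ∈ Icc 1 (n + 1), f (n + 1 - i) i = ∑ pq ∈ antidiagonal n, f pq.1 (pq.2 + 1) := by
  rw [← Nat.sum_antidiagonal_swap, Nat.sum_antidiagonal_eq_sum_range_succ_mk,
    ← Ico_add_one_right_eq_Icc, sum_Ico_eq_sum_range]
  refine sum_congr rfl fun k _ => ?_
  rw [add_comm 1 k, Nat.add_sub_add_right]
  rfl

/-- degree-wise RG equation for the Bogoliubov-type recursion in a
Rota–Baxter algebra: if `R` is a Rota–Baxter operator of weight 1 on a unital
associative `ℚ`-algebra `A`, `c₀ = 1`, `cₙ = R(c_{n−1}·a)`, `ℓ₁ = a` and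
`ℓ_{n+1} = ℓ_n • a = R(ℓ_n)·a − a·R(ℓ_n) + a·ℓ_n`, then
`n·cₙ = Σ_{i=1}^n c_{n−i}·R(ℓᵢ)`. -/
theorem bogoliubov_RG_recursion {A : Type*} [Ring A] [Algebra ℚ A]
    (R : A →ₗ[ℚ] A)
    (hR : ∀ x y : A, R x * R y + R (x * y) = R (R x * y + x * R y))
    (a : A) (c : ℕ → A) (l : ℕ → A)
    (hc0 : c 0 = 1)
    (hc : ∀ n : ℕ, 1 ≤ n → c n = R (c (n - 1) * a))
    (hl1 : l 1 = a)
    (hl : ∀ n : ℕ, 1 ≤ n → l (n + 1) = R (l n) * a - a * R (l n) + a * l n) :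
    ∀ n : ℕ, 1 ≤ n → n • c n = ∑ i ∈ Finset.Icc 1 n, c (n - i) * R (l i) := by
  intro n hn
  obtain ⟨m, rfl⟩ := Nat.exists_eq_add_of_le' hn
  rw [Finset.sum_Icc_one_succ_eq_sum_antidiagonal fun p i => c p * R (l i)]
  exact RotaBaxter.succ_nsmul_eq_sum_antidiagonal (R := R.toAddMonoidHom) a c (fun q => l (q + 1))
    hR hc0 (fun k => hc (k + 1) k.succ_pos) hl1 (fun k => hl (k + 1) k.succ_pos) m
end
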